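/- If Ψ is a coalition partition of a path P_n and some part of Ψ is a singleton dominating set, then n ≤ 3. Consequently, for every n ≥ 4, no coalition graph of a path P_n contains an isolated vertex, so P_n does not define the coalition graphs K̄_2 (two isolated vertices) and K_1 ∪ K_2. -/

import Mathlib

open SimpleGraph

attribute [local instance] Classical.propDecidable

def Dominates {V : Type*} (G : SimpleGraph V) (S : Set V) : Prop :=
  ∀ v, v ∉ S → ∃ u ∈ S, G.Adj u v

def Coalition {V : Type*} (G : SimpleGraph V) (A B : Set V) : Prop :=
  Disjoint A B ∧ ¬ Dominates G A ∧ ¬ Dominates G B ∧ Dominates G (A ∪ B)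

def IsCoalitionPartition {V : Type*} (G : SimpleGraph V) (P : Finset (Set V)) : Prop :=
  (∀ A ∈ P, A.Nonempty) ∧
  (∀ A ∈ P, ∀ B ∈ P, A ≠ B → Disjoint A B) ∧
  (∀ v : V, ∃ A ∈ P, v ∈ A) ∧
  (∀ A ∈ P, (Dominates G A ∧ ∃ v, A = {v}) ∨
    (¬ Dominates G A ∧ ∃ B ∈ P, B ≠ A ∧ Coalition G A B))

noncomputable def coalitionNumber {V : Type*} (G : SimpleGraph V) : ℕ :=
  sSup {n | ∃ P : Finset (Set V), IsCoalitionPartition G P ∧ P.card = n}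

def coalitionGraph {V : Type*} (G : SimpleGraph V) (P : Finset (Set V)) :
    SimpleGraph {A : Set V // A ∈ P} where
  Adj A B := Coalition G A.1 B.1
  symm := by
    constructor
    rintro A B ⟨d, na, nb, u⟩
    exact ⟨d.symm, nb, na, by rwa [Set.union_comm]⟩
  loopless := by
    constructor
    rintro ⟨A, hA⟩ ⟨d, na, nb, u⟩
    rw [Set.union_self] at u
    exact na u

/-- `K_1 ∪ K_2`: vertex `0` isolated and an edge between `1` and `2`. -/
def K1UnionK2 : SimpleGraph (Fin 3) :=
  SimpleGraph.fromEdgeSet {s(1, 2)}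

lemma Dominates.singleton_adj {V : Type*} {G : SimpleGraph V} {v w : V}
    (h : Dominates G {v}) (hw : w ≠ v) : G.Adj v w := by
  obtain ⟨u, rfl, huw⟩ := h w hw
  exact huw

-- Every vertex of `P_n` misses `0` or `3` from its closed neighbourhood.
lemma not_dominates_singleton_pathGraph {n : ℕ} (hn : 4 ≤ n) (v : Fin n) :
    ¬ Dominates (pathGraph n) {v} := by
  intro hv
  have far : ∀ w : Fin n, (w.val + 2 ≤ v.val ∨ v.val + 2 ≤ w.val) → False := fun w hw => by
    have hadj := hv.singleton_adj (w := w) (by rintro rfl; omega)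
    rw [pathGraph_adj] at hadj
    omega
  by_cases hv1 : v.val ≤ 1
  · exact far ⟨3, by omega⟩ (by simp only; omega)
  · exact far ⟨0, by omega⟩ (by simp only; omega)

lemma IsCoalitionPartition.exists_coalitionGraph_adj {V : Type*} {G : SimpleGraph V}
    {P : Finset (Set V)} (hP : IsCoalitionPartition G P)
    (hG : ∀ v, ¬ Dominates G {v}) (A : {A : Set V // A ∈ P}) :
    ∃ B, (coalitionGraph G P).Adj A B := by
  rcases hP.2.2.2 A.1 A.2 with ⟨hA, v, hAv⟩ | ⟨-, B, hB, -, hAB⟩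
  · exact absurd (hAv ▸ hA) (hG v)
  · exact ⟨⟨B, hB⟩, hAB⟩

lemma SimpleGraph.not_nonempty_iso_of_isolated {V W : Type*} {G : SimpleGraph V}
    {H : SimpleGraph W} (hG : ∀ a, ∃ b, G.Adj a b) (w : W) (hw : ∀ u, ¬ H.Adj w u) :
    ¬ Nonempty (G ≃g H) := by
  rintro ⟨e⟩
  obtain ⟨b, hb⟩ := hG (e.symm w)
  exact hw (e b) (by simpa using e.map_rel_iff.mpr hb)

lemma K1UnionK2_not_adj_zero (u : Fin 3) : ¬ K1UnionK2.Adj 0 u := by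
  simp [K1UnionK2, fromEdgeSet_adj]

theorem stmt10 :
    (∀ (n : ℕ) (P : Finset (Set (Fin n))),
      IsCoalitionPartition (SimpleGraph.pathGraph n) P →
      (∃ A ∈ P, Dominates (SimpleGraph.pathGraph n) A ∧ ∃ v, A = {v}) → n ≤ 3) ∧
    (∀ n : ℕ, 4 ≤ n → ∀ P : Finset (Set (Fin n)),
      IsCoalitionPartition (SimpleGraph.pathGraph n) P →
      (∀ A : {A : Set (Fin n) // A ∈ P}, ∃ B,
        (coalitionGraph (SimpleGraph.pathGraph n) P).Adj A B) ∧
      ¬ Nonempty ((coalitionGraph (SimpleGraph.pathGraph n) P) ≃g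
          (⊥ : SimpleGraph (Fin 2))) ∧
      ¬ Nonempty ((coalitionGraph (SimpleGraph.pathGraph n) P) ≃g K1UnionK2)) := by
  refine ⟨fun n P _ ⟨A, _, hA, v, hAv⟩ => ?_, fun n hn P hP => ?_⟩
  · by_contra hn
    exact not_dominates_singleton_pathGraph (by omega) v (hAv ▸ hA)
  · have hadj := hP.exists_coalitionGraph_adj (not_dominates_singleton_pathGraph hn)
    exact ⟨hadj, not_nonempty_iso_of_isolated hadj 0 fun _ => id,
      not_nonempty_iso_of_isolated hadj 0 K1UnionK2_not_adj_zero⟩
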